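/- arXiv:2103.10129 — 3 statements merged into one kernel-verified Lean document; each statement's English description precedes it below -/
import Mathlib

section
/- Let A = M − N be a splitting of A ∈ ℝ^{n×n}, let B ∈ ℝ^{n×n}, b ∈ ℝⁿ, and let Ω ∈ ℝ^{n×n} be such that Ω + M is invertible. Assume x* ∈ ℝⁿ satisfies F(x*) = 0 and that ‖(Ω+M)^{-1}‖·(‖Ω+N‖ + ‖B‖) < 1. Then the exact Newton-based matrix splitting iteration x^{k+1} = (Ω+M)^{-1}[(Ω+N)x^k + B|x^k| + b], started from any x^0 ∈ ℝⁿ, satisfies ‖x^{k+1} − x*‖ ≤ ‖(Ω+M)^{-1}‖·(‖Ω+N‖ + ‖B‖)·‖x^k − x*‖ for all k ≥ 0; in particular the sequence {x^k} converges linearly to x*. -/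
open Matrix Filter

/-- Componentwise absolute value of a vector in Euclidean space. -/
noncomputable def vabs {n : ℕ} (x : EuclideanSpace ℝ (Fin n)) : EuclideanSpace ℝ (Fin n) :=
  WithLp.toLp 2 (fun i => |x i|)

/-- A matrix acting on Euclidean space (so that vector norms are the Euclidean 2-norm). -/
noncomputable def mulV {n : ℕ} (M : Matrix (Fin n) (Fin n) ℝ) (x : EuclideanSpace ℝ (Fin n)) :
    EuclideanSpace ℝ (Fin n) :=
  Matrix.toEuclideanCLM (𝕜 := ℝ) M x

/-- Spectral norm of a real matrix: the operator norm induced by the Euclidean vector norm. -/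
noncomputable def spec {n : ℕ} (M : Matrix (Fin n) (Fin n) ℝ) : ℝ :=
  ‖Matrix.toEuclideanCLM (𝕜 := ℝ) M‖

/-- The GAVE residual function `F(x) = A x − B |x| − b`. -/
noncomputable def gaveF {n : ℕ} (A B : Matrix (Fin n) (Fin n) ℝ)
    (b : EuclideanSpace ℝ (Fin n)) (x : EuclideanSpace ℝ (Fin n)) : EuclideanSpace ℝ (Fin n) :=
  mulV A x - mulV B (vabs x) - b

/-- The AVE residual function `A x − |x| − b` (the GAVE with `B = I`). -/
noncomputable def aveF {n : ℕ} (A : Matrix (Fin n) (Fin n) ℝ)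
    (b : EuclideanSpace ℝ (Fin n)) (x : EuclideanSpace ℝ (Fin n)) : EuclideanSpace ℝ (Fin n) :=
  mulV A x - vabs x - b

/-- A sequence converges linearly to `xs`: the distances to `xs` contract by a fixed
factor `c < 1` at every step, and the sequence tends to `xs`. -/
def ConvergesLinearlyTo {n : ℕ} (x : ℕ → EuclideanSpace ℝ (Fin n))
    (xs : EuclideanSpace ℝ (Fin n)) : Prop :=
  (∃ c : ℝ, 0 ≤ c ∧ c < 1 ∧ ∀ k : ℕ, ‖x (k + 1) - xs‖ ≤ c * ‖x k - xs‖) ∧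
    Tendsto x atTop (nhds xs)

/-!
Because `F(x*) = 0` and `A = M - N`, the solution `x*` is a fixed point of the iteration map
`T x = (Ω+M)⁻¹ ((Ω+N) x + B |x| + b)`. As `x ↦ |x|` is 1-Lipschitz for the Euclidean norm,
`T` is Lipschitz with constant `‖(Ω+M)⁻¹‖ (‖Ω+N‖ + ‖B‖) < 1`, so the errors `‖x^k - x*‖`
shrink geometrically.
-/

variable {n : ℕ}

section MatrixAction

variable (P Q : Matrix (Fin n) (Fin n) ℝ) (u v : EuclideanSpace ℝ (Fin n))

lemma mulV_add_matrix : mulV (P + Q) u = mulV P u + mulV Q u := by simp [mulV]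

lemma mulV_sub : mulV P (u - v) = mulV P u - mulV P v := by simp [mulV]

lemma mulV_inv_mulV {P : Matrix (Fin n) (Fin n) ℝ} (hP : IsUnit P) :
    mulV P⁻¹ (mulV P u) = u := by
  have hdet : IsUnit P.det := (Matrix.isUnit_iff_isUnit_det P).mp hP
  rw [mulV, mulV, ← mul_apply_eq_comp, ← map_mul, Matrix.nonsing_inv_mul P hdet,
    map_one, one_apply_eq_self]

lemma spec_nonneg : 0 ≤ spec P := norm_nonneg _

lemma norm_mulV_le : ‖mulV P u‖ ≤ spec P * ‖u‖ :=
  (Matrix.toEuclideanCLM (𝕜 := ℝ) P).le_opNorm u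

lemma norm_vabs_sub_vabs_le : ‖vabs u - vabs v‖ ≤ ‖u - v‖ := by
  rw [EuclideanSpace.norm_eq, EuclideanSpace.norm_eq]
  gcongr with i
  simpa [vabs] using abs_abs_sub_abs_le_abs_sub (u i) (v i)

end MatrixAction

-- For `P = Ω + M`, `Q = Ω + N` this is one step of the Newton-based matrix splitting iteration.
noncomputable def splittingStep (P Q B : Matrix (Fin n) (Fin n) ℝ)
    (b x : EuclideanSpace ℝ (Fin n)) : EuclideanSpace ℝ (Fin n) :=
  mulV P⁻¹ (mulV Q x + mulV B (vabs x) + b)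

lemma splittingStep_eq_self_of_gaveF_eq_zero {A P Q B : Matrix (Fin n) (Fin n) ℝ}
    {b xs : EuclideanSpace ℝ (Fin n)} (hA : A = P - Q) (hP : IsUnit P)
    (hxs : gaveF A B b xs = 0) :
    splittingStep P Q B b xs = xs := by
  have hAxs : mulV A xs = mulV B (vabs xs) + b := by
    rw [gaveF, sub_sub, sub_eq_zero] at hxs
    exact hxs
  have hPxs : mulV P xs = mulV Q xs + mulV B (vabs xs) + b := by
    rw [show P = Q + A by rw [hA]; abel, mulV_add_matrix, hAxs, add_assoc]
  rw [splittingStep, ← hPxs, mulV_inv_mulV xs hP]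

lemma norm_splittingStep_sub_le (P Q B : Matrix (Fin n) (Fin n) ℝ)
    (b x y : EuclideanSpace ℝ (Fin n)) :
    ‖splittingStep P Q B b x - splittingStep P Q B b y‖ ≤
      spec P⁻¹ * (spec Q + spec B) * ‖x - y‖ := by
  have hdiff : splittingStep P Q B b x - splittingStep P Q B b y =
      mulV P⁻¹ (mulV Q (x - y) + mulV B (vabs x - vabs y)) := by
    rw [splittingStep, splittingStep, ← mulV_sub, mulV_sub Q, mulV_sub B]
    congr 1
    abel
  rw [hdiff, mul_assoc]
  refine (norm_mulV_le _ _).trans (mul_le_mul_of_nonneg_left ?_ (norm_nonneg _))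
  calc ‖mulV Q (x - y) + mulV B (vabs x - vabs y)‖
      ≤ spec Q * ‖x - y‖ + spec B * ‖vabs x - vabs y‖ :=
        (norm_add_le _ _).trans (add_le_add (norm_mulV_le _ _) (norm_mulV_le _ _))
    _ ≤ spec Q * ‖x - y‖ + spec B * ‖x - y‖ := by
        have := spec_nonneg B
        gcongr
        exact norm_vabs_sub_vabs_le x y
    _ = (spec Q + spec B) * ‖x - y‖ := by ring

lemma tendsto_of_dist_succ_le_mul {X : Type*} [PseudoMetricSpace X] {x : ℕ → X} {a : X}
    {c : ℝ} (hc0 : 0 ≤ c) (hc1 : c < 1) (h : ∀ k, dist (x (k + 1)) a ≤ c * dist (x k) a) :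
    Tendsto x atTop (nhds a) := by
  have hgeom : ∀ k, dist (x k) a ≤ c ^ k * dist (x 0) a :=
    fun k => le_geom (u := fun k => dist (x k) a) hc0 k fun j _ => h j
  have hlim : Tendsto (fun k => c ^ k * dist (x 0) a) atTop (nhds 0) := by
    simpa using (tendsto_pow_atTop_nhds_zero_of_lt_one hc0 hc1).mul_const (dist (x 0) a)
  exact tendsto_iff_dist_tendsto_zero.mpr (squeeze_zero (fun _ => dist_nonneg) hgeom hlim)

theorem stmt0 {n : ℕ} (A M N B Ω : Matrix (Fin n) (Fin n) ℝ)
    (b : EuclideanSpace ℝ (Fin n)) (hA : A = M - N) (hinv : IsUnit (Ω + M))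
    (xs : EuclideanSpace ℝ (Fin n)) (hxs : gaveF A B b xs = 0)
    (hcond : spec (Ω + M)⁻¹ * (spec (Ω + N) + spec B) < 1)
    (x : ℕ → EuclideanSpace ℝ (Fin n))
    (hx : ∀ k : ℕ, x (k + 1) = mulV (Ω + M)⁻¹ (mulV (Ω + N) (x k) + mulV B (vabs (x k)) + b)) :
    (∀ k : ℕ, ‖x (k + 1) - xs‖ ≤ spec (Ω + M)⁻¹ * (spec (Ω + N) + spec B) * ‖x k - xs‖) ∧
      ConvergesLinearlyTo x xs := by
  have hfix : splittingStep (Ω + M) (Ω + N) B b xs = xs :=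
    splittingStep_eq_self_of_gaveF_eq_zero (by rw [hA]; abel) hinv hxs
  set c := spec (Ω + M)⁻¹ * (spec (Ω + N) + spec B)
  have hcontract : ∀ k, ‖x (k + 1) - xs‖ ≤ c * ‖x k - xs‖ := by
    intro k
    rw [hx k]
    nth_rewrite 1 [← hfix]
    exact norm_splittingStep_sub_le _ _ _ _ _ _
  have hc0 : 0 ≤ c :=
    mul_nonneg (spec_nonneg _) (add_nonneg (spec_nonneg _) (spec_nonneg _))
  refine ⟨hcontract, ⟨_, hc0, hcond, hcontract⟩, tendsto_of_dist_succ_le_mul hc0 hcond ?_⟩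
  simpa only [dist_eq_norm] using hcontract
end

section
/- Let A = M − N be a splitting of A ∈ ℝ^{n×n}, let B ∈ ℝ^{n×n}, b ∈ ℝⁿ, θ ∈ [0,1), and let Ω ∈ ℝ^{n×n} be such that Ω + M is invertible. Suppose F(x*) = 0. Then for every x, y ∈ ℝⁿ with ‖(Ω+M)y − [(Ω+N)x + B|x| + b]‖ ≤ θ‖F(x)‖, one has ‖y − x*‖ ≤ ‖(Ω+M)^{-1}‖·[θ(‖Ω+M‖ + ‖Ω+N‖ + ‖B‖) + ‖Ω+N‖ + ‖B‖]·‖x − x*‖. -/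
open Matrix Filter

/-!
Write `P = Ω + M`, `Q = Ω + N`, so `A = P - Q`. Subtracting `P x* = Q x* + B|x*| + b` from the
inexact step gives `P (y - x*) = r + Q (x - x*) + B (|x| - |x*|)`, where `r` is the residual of the
step, bounded by `θ ‖F(x)‖`. Since `|·|` is 1-Lipschitz, `‖F(x)‖ = ‖F(x) - F(x*)‖` is at most
`(‖P‖ + ‖Q‖ + ‖B‖) ‖x - x*‖`, and applying `P⁻¹` yields the bound.
-/

section

variable {n : ℕ}

lemma mulV_sub_right (M : Matrix (Fin n) (Fin n) ℝ) (x y : EuclideanSpace ℝ (Fin n)) :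
    mulV M (x - y) = mulV M x - mulV M y :=
  map_sub _ x y

lemma mulV_sub_left (M N : Matrix (Fin n) (Fin n) ℝ) (x : EuclideanSpace ℝ (Fin n)) :
    mulV (M - N) x = mulV M x - mulV N x := by
  simp [mulV, map_sub]

lemma norm_mulV_le_s1 (M : Matrix (Fin n) (Fin n) ℝ) (x : EuclideanSpace ℝ (Fin n)) :
    ‖mulV M x‖ ≤ spec M * ‖x‖ :=
  ContinuousLinearMap.le_opNorm _ _

lemma spec_sub_le (M N : Matrix (Fin n) (Fin n) ℝ) : spec (M - N) ≤ spec M + spec N := by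
  simpa only [spec, map_sub] using norm_sub_le _ _

lemma norm_vabs_sub_vabs_le_s1 (x y : EuclideanSpace ℝ (Fin n)) :
    ‖vabs x - vabs y‖ ≤ ‖x - y‖ := by
  rw [EuclideanSpace.norm_eq, EuclideanSpace.norm_eq]
  gcongr with i
  exact abs_abs_sub_abs_le_abs_sub (x i) (y i)

lemma norm_mulV_vabs_sub_le (B : Matrix (Fin n) (Fin n) ℝ)
    (x y : EuclideanSpace ℝ (Fin n)) :
    ‖mulV B (vabs x - vabs y)‖ ≤ spec B * ‖x - y‖ :=
  (norm_mulV_le_s1 B _).trans (mul_le_mul_of_nonneg_left (norm_vabs_sub_vabs_le_s1 x y) (norm_nonneg _))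

lemma norm_le_spec_inv_mul_norm_mulV {M : Matrix (Fin n) (Fin n) ℝ} (hM : IsUnit M)
    (x : EuclideanSpace ℝ (Fin n)) : ‖x‖ ≤ spec M⁻¹ * ‖mulV M x‖ := by
  have hx : mulV M⁻¹ (mulV M x) = x := by
    rw [mulV, mulV, ← mul_apply_eq_comp, ← map_mul,
      Matrix.nonsing_inv_mul M ((Matrix.isUnit_iff_isUnit_det M).mp hM), map_one,
      one_apply_eq_self]
  calc ‖x‖ = ‖mulV M⁻¹ (mulV M x)‖ := by rw [hx]
    _ ≤ spec M⁻¹ * ‖mulV M x‖ := norm_mulV_le_s1 _ _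

lemma norm_gaveF_sub_gaveF_le (A B : Matrix (Fin n) (Fin n) ℝ)
    (b x y : EuclideanSpace ℝ (Fin n)) :
    ‖gaveF A B b x - gaveF A B b y‖ ≤ (spec A + spec B) * ‖x - y‖ := by
  have h : gaveF A B b x - gaveF A B b y = mulV A (x - y) - mulV B (vabs x - vabs y) := by
    simp only [gaveF, mulV_sub_right]
    abel
  rw [h, add_mul]
  exact (norm_sub_le _ _).trans (add_le_add (norm_mulV_le_s1 A _) (norm_mulV_vabs_sub_le B x y))

lemma mulV_sub_eq_of_gaveF_eq_zero {A B P Q : Matrix (Fin n) (Fin n) ℝ}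
    {b xs : EuclideanSpace ℝ (Fin n)} (hPQ : P - Q = A) (hxs : gaveF A B b xs = 0)
    (x y : EuclideanSpace ℝ (Fin n)) :
    mulV P (y - xs) = (mulV P y - (mulV Q x + mulV B (vabs x) + b))
      + mulV Q (x - xs) + mulV B (vabs x - vabs xs) := by
  have hPxs : mulV P xs = mulV Q xs + mulV B (vabs xs) + b := by
    rw [gaveF, ← hPQ, mulV_sub_left] at hxs
    linear_combination (norm := abel) hxs
  simp only [mulV_sub_right, hPxs]
  abel

end

theorem stmt1_general {n : ℕ} (A M N B Ω : Matrix (Fin n) (Fin n) ℝ)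
    (b : EuclideanSpace ℝ (Fin n)) (hA : A = M - N) (θ : ℝ) (hθ0 : 0 ≤ θ)
    (hinv : IsUnit (Ω + M))
    (xs : EuclideanSpace ℝ (Fin n)) (hxs : gaveF A B b xs = 0) :
    ∀ x y : EuclideanSpace ℝ (Fin n),
      ‖mulV (Ω + M) y - (mulV (Ω + N) x + mulV B (vabs x) + b)‖ ≤ θ * ‖gaveF A B b x‖ →
      ‖y - xs‖ ≤ spec (Ω + M)⁻¹ *
        (θ * (spec (Ω + M) + spec (Ω + N) + spec B) + spec (Ω + N) + spec B) * ‖x - xs‖ := by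
  intro x y hy
  set P := Ω + M
  set Q := Ω + N
  have hPQ : P - Q = A := by rw [hA, add_sub_add_left_eq_sub]
  have hFx : ‖gaveF A B b x‖ ≤ (spec P + spec Q + spec B) * ‖x - xs‖ := by
    have h := norm_gaveF_sub_gaveF_le A B b x xs
    rw [hxs, sub_zero] at h
    exact h.trans (by rw [← hPQ]; gcongr; exact spec_sub_le P Q)
  have hPy : ‖mulV P (y - xs)‖ ≤ θ * ‖gaveF A B b x‖ + (spec Q + spec B) * ‖x - xs‖ := by
    rw [mulV_sub_eq_of_gaveF_eq_zero hPQ hxs x y, add_mul, ← add_assoc]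
    exact (norm_add_le _ _).trans (add_le_add ((norm_add_le _ _).trans
      (add_le_add hy (norm_mulV_le_s1 Q _))) (norm_mulV_vabs_sub_le B x xs))
  calc ‖y - xs‖ ≤ spec P⁻¹ * ‖mulV P (y - xs)‖ := norm_le_spec_inv_mul_norm_mulV hinv _
    _ ≤ spec P⁻¹ *
        (θ * ((spec P + spec Q + spec B) * ‖x - xs‖) + (spec Q + spec B) * ‖x - xs‖) := by
      gcongr
      · exact norm_nonneg _
      · exact hPy.trans (by gcongr)
    _ = _ := by ring

theorem stmt1 {n : ℕ} (A M N B Ω : Matrix (Fin n) (Fin n) ℝ)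
    (b : EuclideanSpace ℝ (Fin n)) (hA : A = M - N) (θ : ℝ) (hθ0 : 0 ≤ θ) (hθ1 : θ < 1)
    (hinv : IsUnit (Ω + M))
    (xs : EuclideanSpace ℝ (Fin n)) (hxs : gaveF A B b xs = 0) :
    ∀ x y : EuclideanSpace ℝ (Fin n),
      ‖mulV (Ω + M) y - (mulV (Ω + N) x + mulV B (vabs x) + b)‖ ≤ θ * ‖gaveF A B b x‖ →
      ‖y - xs‖ ≤ spec (Ω + M)⁻¹ *
        (θ * (spec (Ω + M) + spec (Ω + N) + spec B) + spec (Ω + N) + spec B) * ‖x - xs‖ :=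
  stmt1_general A M N B Ω b hA θ hθ0 hinv xs hxs
end

section
/- Let A ∈ ℝ^{n×n} be positive definite (xᵀAx > 0 for all nonzero x), write H = (A + Aᵀ)/2 and S = (A − Aᵀ)/2. Let λ_min and λ_max be the minimum and maximum eigenvalues of the symmetric matrix H, and let μ_max be the maximum of the absolute values of the (complex) eigenvalues of S. Let b ∈ ℝⁿ, θ ∈ [0,1), ω > 0 and Ω = ωI. Suppose x* satisfies Ax* − |x*| − b = 0 and ω + λ_min − 1 > √(ω² + μ_max²) + θ(ω + λ_max + 1 + √(ω² + μ_max²)). Then any sequence {x^k} in ℝⁿ satisfying ‖(ωI + H)x^{k+1} − [(ωI − S)x^k + |x^k| + b]‖ ≤ θ‖Ax^k − |x^k| − b‖ for all k ≥ 0 converges linearly to x*, and x* is the unique solution of the AVE Ax − |x| − b = 0. -/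
open Matrix Filter

/-! With `M = ωI + H` and `N = ωI - S` the iteration reads `M x' ≈ N x + |x| + b`, and `x*` is the
fixed point `M x* = N x* + |x*| + b`. As `H` is symmetric with spectrum in `[λ_min, λ_max]`,
`(ω + λ_min)‖y‖ ≤ ‖M y‖ ≤ (ω + λ_max)‖y‖`. As `S` is skew, `‖N y‖² = ω²‖y‖² + ‖S y‖²`, and
`‖S y‖ ≤ μ_max ‖y‖` because the complexification of `S` is normal, so that its operator norm is
its spectral radius. Since `|·|` is 1-Lipschitz, subtracting the fixed-point equation from one
inexact step gives `‖x^{k+1} - x*‖ ≤ c ‖x^k - x*‖` with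
`c = (θ (ω + λ_max + 1 + √(ω² + μ_max²)) + √(ω² + μ_max²) + 1) / (ω + λ_min)`, and `c < 1` is the
hypothesis on `ω`. The same estimate for a second solution, viewed as a constant sequence, gives
uniqueness. -/

theorem lipschitzWith_vabs (n : ℕ) : LipschitzWith 1 (vabs (n := n)) := by
  refine LipschitzWith.of_dist_le_mul fun u v => ?_
  rw [NNReal.coe_one, one_mul, EuclideanSpace.dist_eq, EuclideanSpace.dist_eq]
  gcongr with i
  simp only [vabs, Real.dist_eq]
  exact abs_abs_sub_abs_le_abs_sub _ _

namespace LinearMap.IsSymmetric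

variable {E : Type*} [NormedAddCommGroup E] [InnerProductSpace ℝ E] [FiniteDimensional ℝ E]
  {T : E →ₗ[ℝ] E}

theorem eigenvalues_mem_spectrum (hT : T.IsSymmetric) (i : Fin (Module.finrank ℝ E)) :
    hT.eigenvalues rfl i ∈ spectrum ℝ T :=
  Module.End.hasEigenvalue_iff_mem_spectrum.mp (hT.hasEigenvalue_eigenvalues rfl i)

theorem norm_smul_add_apply_sq (hT : T.IsSymmetric) (c : ℝ) (v : E) :
    ‖c • v + T v‖ ^ 2 =
      ∑ i, (c + hT.eigenvalues rfl i) ^ 2 * ‖(hT.eigenvectorBasis rfl).repr v i‖ ^ 2 := by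
  rw [← (hT.eigenvectorBasis rfl).repr.norm_map, EuclideanSpace.norm_sq_eq]
  congr 1 with i
  simp only [map_add, map_smul, WithLp.ofLp_add, WithLp.ofLp_smul, Pi.add_apply, Pi.smul_apply,
    smul_eq_mul, hT.eigenvectorBasis_apply_self_apply, RCLike.ofReal_real_eq_id, id_eq,
    Real.norm_eq_abs, sq_abs]
  ring

theorem mul_norm_le_norm_smul_add_apply (hT : T.IsSymmetric) {a c : ℝ} (ha : 0 ≤ a)
    (h : ∀ μ ∈ spectrum ℝ T, a ≤ |c + μ|) (v : E) : a * ‖v‖ ≤ ‖c • v + T v‖ := by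
  rw [← pow_le_pow_iff_left₀ (by positivity) (norm_nonneg _) two_ne_zero, mul_pow,
    hT.norm_smul_add_apply_sq, ← (hT.eigenvectorBasis rfl).repr.norm_map v,
    EuclideanSpace.norm_sq_eq, Finset.mul_sum]
  refine Finset.sum_le_sum fun i _ => mul_le_mul_of_nonneg_right ?_ (sq_nonneg _)
  rw [← sq_abs (c + _)]
  exact pow_le_pow_left₀ ha (h _ (hT.eigenvalues_mem_spectrum i)) 2

theorem norm_smul_add_apply_le (hT : T.IsSymmetric) {a c : ℝ} (ha : 0 ≤ a)
    (h : ∀ μ ∈ spectrum ℝ T, |c + μ| ≤ a) (v : E) : ‖c • v + T v‖ ≤ a * ‖v‖ := by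
  rw [← pow_le_pow_iff_left₀ (norm_nonneg _) (by positivity) two_ne_zero, mul_pow,
    hT.norm_smul_add_apply_sq, ← (hT.eigenvectorBasis rfl).repr.norm_map v,
    EuclideanSpace.norm_sq_eq, Finset.mul_sum]
  refine Finset.sum_le_sum fun i _ => mul_le_mul_of_nonneg_right ?_ (sq_nonneg _)
  rw [← sq_abs (c + _)]
  exact pow_le_pow_left₀ (abs_nonneg _) (h _ (hT.eigenvalues_mem_spectrum i)) 2

end LinearMap.IsSymmetric

theorem EuclideanSpace.norm_toLp_ofReal {ι : Type*} [Fintype ι] (v : ι → ℝ) :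
    ‖(WithLp.toLp 2 fun i => (v i : ℂ) : EuclideanSpace ℂ ι)‖ =
      ‖(WithLp.toLp 2 v : EuclideanSpace ℝ ι)‖ := by
  simp [EuclideanSpace.norm_eq]

namespace Matrix

theorem isHermitian_inv_two_smul_add_transpose {ι : Type*} (A : Matrix ι ι ℝ) :
    ((2 : ℝ)⁻¹ • (A + Aᵀ)).IsHermitian := by
  rw [IsHermitian, conjTranspose_eq_transpose_of_trivial]
  simp [transpose_smul, transpose_add, add_comm]

theorem transpose_inv_two_smul_sub_transpose {ι : Type*} (A : Matrix ι ι ℝ) :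
    ((2 : ℝ)⁻¹ • (A - Aᵀ))ᵀ = -((2 : ℝ)⁻¹ • (A - Aᵀ)) := by
  rw [transpose_smul, transpose_sub, transpose_transpose, ← smul_neg, neg_sub]

variable {ι : Type*} [Fintype ι] [DecidableEq ι]

theorem IsHermitian.mul_norm_le_norm_toEuclideanCLM_smul_one_add_apply
    {H : Matrix ι ι ℝ} (hH : H.IsHermitian) {a c : ℝ} (hspec : spectrum ℝ H ⊆ Set.Ici a)
    (hca : 0 ≤ c + a) (y : EuclideanSpace ℝ ι) :
    (c + a) * ‖y‖ ≤ ‖toEuclideanCLM (𝕜 := ℝ) (c • 1 + H) y‖ := by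
  have hT := isSymmetric_toEuclideanLin_iff.mpr hH
  simpa [← coe_toEuclideanCLM_eq_toEuclideanLin] using
    hT.mul_norm_le_norm_smul_add_apply hca (fun μ hμ => by
      have : a ≤ μ := hspec (by rwa [toEuclideanLin, spectrum_toLpLin] at hμ)
      exact (le_abs_self _).trans' (by linarith)) y

theorem IsHermitian.norm_toEuclideanCLM_smul_one_add_apply_le
    {H : Matrix ι ι ℝ} (hH : H.IsHermitian) {a b c : ℝ} (hspec : spectrum ℝ H ⊆ Set.Icc a b)
    (hca : 0 ≤ c + a) (hab : a ≤ b) (y : EuclideanSpace ℝ ι) :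
    ‖toEuclideanCLM (𝕜 := ℝ) (c • 1 + H) y‖ ≤ (c + b) * ‖y‖ := by
  have hT := isSymmetric_toEuclideanLin_iff.mpr hH
  simpa [← coe_toEuclideanCLM_eq_toEuclideanLin] using
    hT.norm_smul_add_apply_le (by linarith) (fun μ hμ => by
      have := hspec (by rwa [toEuclideanLin, spectrum_toLpLin] at hμ)
      exact abs_le.mpr ⟨by linarith [this.1], by linarith [this.2]⟩) y

theorem norm_toEuclideanCLM_map_ofReal_le {S : Matrix ι ι ℝ} (hS : Commute Sᵀ S) {μ : ℝ}
    (hμ : ∀ z ∈ spectrum ℂ (S.map ((↑) : ℝ → ℂ)), ‖z‖ ≤ μ) (hμ0 : 0 ≤ μ) :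
    ‖toEuclideanCLM (𝕜 := ℂ) (S.map (↑))‖ ≤ μ := by
  set T := toEuclideanCLM (𝕜 := ℂ) (S.map ((↑) : ℝ → ℂ))
  have : IsStarNormal T := by
    refine ⟨?_⟩
    rw [← map_star, star_eq_conjTranspose, ← conjTranspose_map _ (fun x => by simp)]
    have := hS.map Complex.ofRealHom.mapMatrix
    simp only [RingHom.mapMatrix_apply] at this
    exact this.map _
  have hrad : spectralRadius ℂ T ≤ ENNReal.ofReal μ := by
    rw [spectralRadius, AlgEquiv.spectrum_eq]
    refine iSup₂_le fun z hz => ?_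
    rw [ENNReal.le_ofReal_iff_toReal_le ENNReal.coe_ne_top hμ0]
    exact hμ z hz
  rwa [IsStarNormal.spectralRadius_eq_nnnorm,
    ENNReal.le_ofReal_iff_toReal_le ENNReal.coe_ne_top hμ0] at hrad

theorem norm_toEuclideanCLM_apply_le (S : Matrix ι ι ℝ) (y : EuclideanSpace ℝ ι) :
    ‖toEuclideanCLM (𝕜 := ℝ) S y‖ ≤ ‖toEuclideanCLM (𝕜 := ℂ) (S.map (↑))‖ * ‖y‖ := by
  have hmap : (WithLp.toLp 2 fun i => ((S *ᵥ y.ofLp) i : ℂ) : EuclideanSpace ℂ ι) =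
      toEuclideanCLM (𝕜 := ℂ) (S.map (↑)) (WithLp.toLp 2 fun i => (y i : ℂ)) := by
    ext i
    exact Complex.ofRealHom.map_mulVec S y.ofLp i
  calc ‖toEuclideanCLM (𝕜 := ℝ) S y‖
      = ‖(WithLp.toLp 2 fun i => ((S *ᵥ y.ofLp) i : ℂ) : EuclideanSpace ℂ ι)‖ :=
        (EuclideanSpace.norm_toLp_ofReal _).symm
    _ ≤ ‖toEuclideanCLM (𝕜 := ℂ) (S.map (↑))‖ *
          ‖(WithLp.toLp 2 fun i => (y i : ℂ) : EuclideanSpace ℂ ι)‖ := by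
        rw [hmap]
        exact ContinuousLinearMap.le_opNorm _ _
    _ = _ := by rw [EuclideanSpace.norm_toLp_ofReal]

open scoped RealInnerProductSpace in
theorem norm_toEuclideanCLM_smul_one_sub_apply_le {S : Matrix ι ι ℝ} (hS : Sᵀ = -S) {μ : ℝ}
    (hμ : ∀ z ∈ spectrum ℂ (S.map ((↑) : ℝ → ℂ)), ‖z‖ ≤ μ) (hμ0 : 0 ≤ μ) (c : ℝ)
    (y : EuclideanSpace ℝ ι) :
    ‖toEuclideanCLM (𝕜 := ℝ) (c • 1 - S) y‖ ≤ √(c ^ 2 + μ ^ 2) * ‖y‖ := by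
  have hSy : ‖toEuclideanCLM (𝕜 := ℝ) S y‖ ≤ μ * ‖y‖ :=
    (norm_toEuclideanCLM_apply_le S y).trans <| mul_le_mul_of_nonneg_right
      (norm_toEuclideanCLM_map_ofReal_le (by rw [hS]; exact (Commute.refl S).neg_left) hμ hμ0)
      (norm_nonneg _)
  have hinner : ⟪y, toEuclideanCLM (𝕜 := ℝ) S y⟫ = 0 := by
    rw [inner_toEuclideanCLM]
    have h : y.ofLp ⬝ᵥ S *ᵥ y.ofLp = Sᵀ *ᵥ y.ofLp ⬝ᵥ y.ofLp := by
      rw [mulVec_transpose, dotProduct_mulVec]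
    rw [dotProduct_comm (Sᵀ *ᵥ _), hS, neg_mulVec, dotProduct_neg] at h
    linarith
  have hexpand : toEuclideanCLM (𝕜 := ℝ) (c • 1 - S) y = c • y - toEuclideanCLM (𝕜 := ℝ) S y := by
    simp
  rw [hexpand, ← pow_le_pow_iff_left₀ (norm_nonneg _) (by positivity) two_ne_zero, mul_pow,
    Real.sq_sqrt (by positivity), norm_sub_sq_real, inner_smul_left, hinner, norm_smul,
    Real.norm_eq_abs, mul_pow, sq_abs]
  nlinarith [norm_nonneg (toEuclideanCLM (𝕜 := ℝ) S y), norm_nonneg y]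

end Matrix

section Splitting

variable {E : Type*} [NormedAddCommGroup E] [NormedSpace ℝ E] {M N : E →L[ℝ] E} {f : E → E}
  {b xs : E}

theorem norm_sub_le_of_inexact_splitting_step {m p r θ : ℝ} (hm : 0 < m)
    (hMlow : ∀ y, m * ‖y‖ ≤ ‖M y‖) (hMup : ∀ y, ‖M y‖ ≤ p * ‖y‖) (hN : ∀ y, ‖N y‖ ≤ r * ‖y‖)
    (hf : LipschitzWith 1 f) (hθ : 0 ≤ θ) (hxs : M xs = N xs + f xs + b) {z w : E}
    (hstep : ‖M w - (N z + f z + b)‖ ≤ θ * ‖M z - (N z + f z + b)‖) :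
    ‖w - xs‖ ≤ (θ * (p + 1 + r) + r + 1) / m * ‖z - xs‖ := by
  have hfz : ‖f z - f xs‖ ≤ ‖z - xs‖ := by simpa using hf.norm_sub_le z xs
  have hres : ‖M z - (N z + f z + b)‖ ≤ (p + 1 + r) * ‖z - xs‖ := by
    have : M z - (N z + f z + b) = M (z - xs) - (N (z - xs) + (f z - f xs)) := by
      rw [map_sub, map_sub, hxs]
      abel
    calc ‖M z - (N z + f z + b)‖
        ≤ ‖M (z - xs)‖ + (‖N (z - xs)‖ + ‖f z - f xs‖) := by
          rw [this]
          exact (norm_sub_le _ _).trans (add_le_add_right (norm_add_le _ _) _)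
      _ ≤ p * ‖z - xs‖ + (r * ‖z - xs‖ + ‖z - xs‖) := add_le_add (hMup _) (add_le_add (hN _) hfz)
      _ = (p + 1 + r) * ‖z - xs‖ := by ring
  have hMw : M (w - xs) = (M w - (N z + f z + b)) + N (z - xs) + (f z - f xs) := by
    rw [map_sub, map_sub, hxs]
    abel
  rw [div_mul_eq_mul_div, le_div_iff₀ hm]
  calc ‖w - xs‖ * m ≤ ‖M (w - xs)‖ := by rw [mul_comm]; exact hMlow _
    _ ≤ ‖M w - (N z + f z + b)‖ + ‖N (z - xs)‖ + ‖f z - f xs‖ := by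
        rw [hMw]
        exact norm_add₃_le
    _ ≤ θ * ((p + 1 + r) * ‖z - xs‖) + r * ‖z - xs‖ + ‖z - xs‖ := by
        gcongr
        exacts [hstep.trans (by gcongr), hN _]
    _ = (θ * (p + 1 + r) + r + 1) * ‖z - xs‖ := by ring

end Splitting

theorem convergesLinearlyTo_of_norm_sub_le {n : ℕ} {x : ℕ → EuclideanSpace ℝ (Fin n)}
    {xs : EuclideanSpace ℝ (Fin n)} {c : ℝ} (hc0 : 0 ≤ c) (hc1 : c < 1)
    (h : ∀ k, ‖x (k + 1) - xs‖ ≤ c * ‖x k - xs‖) : ConvergesLinearlyTo x xs := by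
  refine ⟨⟨c, hc0, hc1, h⟩, tendsto_iff_norm_sub_tendsto_zero.mpr ?_⟩
  refine squeeze_zero (fun k => norm_nonneg _)
    (fun k => le_geom (u := fun k => ‖x k - xs‖) hc0 k fun j _ => h j) ?_
  simpa using (tendsto_pow_atTop_nhds_zero_of_lt_one hc0 hc1).mul_const ‖x 0 - xs‖

theorem stmt14_general {n : ℕ} (A H S : Matrix (Fin n) (Fin n) ℝ)
    (b : EuclideanSpace ℝ (Fin n))
    (hH : H = (2 : ℝ)⁻¹ • (A + Aᵀ)) (hS : S = (2 : ℝ)⁻¹ • (A - Aᵀ))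
    (lammin lammax mumax : ℝ)
    (hmin : IsLeast (spectrum ℝ H) lammin) (hmax : IsGreatest (spectrum ℝ H) lammax)
    (hmu : IsGreatest ((fun z : ℂ => ‖z‖) ''
      spectrum ℂ (S.map ((↑) : ℝ → ℂ))) mumax)
    (θ ω : ℝ) (hθ0 : 0 ≤ θ) (hθ1 : θ < 1)
    (xs : EuclideanSpace ℝ (Fin n)) (hxs : aveF A b xs = 0)
    (hcond : ω + lammin - 1 > Real.sqrt (ω ^ 2 + mumax ^ 2) +
      θ * (ω + lammax + 1 + Real.sqrt (ω ^ 2 + mumax ^ 2))) :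
    (∀ x : ℕ → EuclideanSpace ℝ (Fin n),
      (∀ k : ℕ, ‖mulV (ω • (1 : Matrix (Fin n) (Fin n) ℝ) + H) (x (k + 1)) -
          (mulV (ω • (1 : Matrix (Fin n) (Fin n) ℝ) - S) (x k) + vabs (x k) + b)‖ ≤
        θ * ‖aveF A b (x k)‖) →
      ConvergesLinearlyTo x xs) ∧
      ∀ y : EuclideanSpace ℝ (Fin n), aveF A b y = 0 → y = xs := by
  set r := Real.sqrt (ω ^ 2 + mumax ^ 2)
  set M := toEuclideanCLM (𝕜 := ℝ) (ω • 1 + H)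
  set N := toEuclideanCLM (𝕜 := ℝ) (ω • 1 - S)
  have hHerm : H.IsHermitian := hH ▸ isHermitian_inv_two_smul_add_transpose A
  have hSskew : Sᵀ = -S := hS ▸ transpose_inv_two_smul_sub_transpose A
  have hspec : spectrum ℝ H ⊆ Set.Icc lammin lammax := fun μ hμ => ⟨hmin.2 hμ, hmax.2 hμ⟩
  have hr : 0 ≤ r := Real.sqrt_nonneg _
  have hlm : lammin ≤ lammax := hmax.2 hmin.1
  -- if `ω + λ_max + 1 + r` were negative, `θ < 1` would make `hcond` fail
  have hpos : 0 < ω + lammin := by nlinarith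
  have hMlow := hHerm.mul_norm_le_norm_toEuclideanCLM_smul_one_add_apply
    (hspec.trans Set.Icc_subset_Ici_self) hpos.le
  have hMup := hHerm.norm_toEuclideanCLM_smul_one_add_apply_le hspec hpos.le hlm
  have hN : ∀ y, ‖N y‖ ≤ r * ‖y‖ := by
    obtain ⟨z, -, hz⟩ := hmu.1
    exact norm_toEuclideanCLM_smul_one_sub_apply_le hSskew (fun z hz => hmu.2 ⟨z, hz, rfl⟩)
      (hz ▸ norm_nonneg z) ω
  have hF : ∀ x, aveF A b x = M x - (N x + vabs x + b) := fun x => by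
    have hA : A = (ω • 1 + H) - (ω • 1 - S) := by rw [hH, hS]; module
    rw [aveF, mulV, hA, map_sub]
    change M x - N x - vabs x - b = _
    abel
  have hxs' : M xs = N xs + vabs xs + b := by rw [← sub_eq_zero, ← hF, hxs]
  set c := (θ * (ω + lammax + 1 + r) + r + 1) / (ω + lammin)
  have hc0 : 0 ≤ c := div_nonneg (by nlinarith) hpos.le
  have hc1 : c < 1 := (div_lt_one hpos).mpr (by linarith)
  have hstep : ∀ z w, ‖M w - (N z + vabs z + b)‖ ≤ θ * ‖aveF A b z‖ → ‖w - xs‖ ≤ c * ‖z - xs‖ :=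
    fun z w h => norm_sub_le_of_inexact_splitting_step hpos hMlow hMup hN (lipschitzWith_vabs n)
      hθ0 hxs' (hF z ▸ h)
  refine ⟨fun x hx => convergesLinearlyTo_of_norm_sub_le hc0 hc1 fun k => hstep _ _ (hx k),
    fun y hy => ?_⟩
  have hyxs := hstep y y (by rw [← hF, hy, norm_zero, mul_zero])
  exact sub_eq_zero.mp (norm_le_zero_iff.mp (by nlinarith [norm_nonneg (y - xs)]))

theorem stmt14 {n : ℕ} (A H S : Matrix (Fin n) (Fin n) ℝ)
    (b : EuclideanSpace ℝ (Fin n))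
    (hposdef : ∀ v : Fin n → ℝ, v ≠ 0 → 0 < v ⬝ᵥ A.mulVec v)
    (hH : H = (2 : ℝ)⁻¹ • (A + Aᵀ)) (hS : S = (2 : ℝ)⁻¹ • (A - Aᵀ))
    (lammin lammax mumax : ℝ)
    (hmin : IsLeast (spectrum ℝ H) lammin) (hmax : IsGreatest (spectrum ℝ H) lammax)
    (hmu : IsGreatest ((fun z : ℂ => ‖z‖) ''
      spectrum ℂ (S.map ((↑) : ℝ → ℂ))) mumax)
    (θ ω : ℝ) (hθ0 : 0 ≤ θ) (hθ1 : θ < 1) (hω : 0 < ω)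
    (xs : EuclideanSpace ℝ (Fin n)) (hxs : aveF A b xs = 0)
    (hcond : ω + lammin - 1 > Real.sqrt (ω ^ 2 + mumax ^ 2) +
      θ * (ω + lammax + 1 + Real.sqrt (ω ^ 2 + mumax ^ 2))) :
    (∀ x : ℕ → EuclideanSpace ℝ (Fin n),
      (∀ k : ℕ, ‖mulV (ω • (1 : Matrix (Fin n) (Fin n) ℝ) + H) (x (k + 1)) -
          (mulV (ω • (1 : Matrix (Fin n) (Fin n) ℝ) - S) (x k) + vabs (x k) + b)‖ ≤
        θ * ‖aveF A b (x k)‖) →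
      ConvergesLinearlyTo x xs) ∧
      ∀ y : EuclideanSpace ℝ (Fin n), aveF A b y = 0 → y = xs :=
  stmt14_general A H S b hH hS lammin lammax mumax hmin hmax hmu θ ω hθ0 hθ1 xs hxs hcond
end
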